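/- Coupling of a wandering domain with a periodic domain. Let ℱ = Φ^{f⊗g} ∘ (F×G) : 𝔸^{m+m'} → 𝔸^{m+m'} with m, m' ≥ 1 integers, F, G diffeomorphisms of 𝔸^m and 𝔸^{m'}, f, g C^∞ Hamiltonians generating complete Hamiltonian vector fields, q ≥ 1 an integer, and 𝒱 ⊂ 𝔸^{m'} with G^q(𝒱) = 𝒱 and the synchronization conditions (for all x' ∈ 𝒱: g(x') = 1, dg(x') = 0, and g(G^s(x')) = 0, dg(G^s(x')) = 0 for 1 ≤ s ≤ q−1). If the diffeomorphism Φ^f ∘ F^q admits a wandering subset 𝒰 ⊂ 𝔸^m, then the product set 𝒰 × 𝒱 ⊂ 𝔸^{m+m'} is wandering for ℱ. -/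

import Mathlib

open scoped BigOperators ENNReal

noncomputable section


/-- Lift of the phase space `𝔸ᵏ = 𝕋ᵏ × ℝᵏ`. -/
abbrev PS (n : ℕ) := (Fin n → ℝ) × (Fin n → ℝ)

/-- Translation by `ℓ ∈ ℤᵏ` in the angle variables. -/
def ztrans {n : ℕ} (ℓ : Fin n → ℤ) (x : PS n) : PS n :=
  (x.1 + fun i => (ℓ i : ℝ), x.2)

/-- `ℤᵏ`-periodicity in the angle variables. -/
def ZnPeriodic {n : ℕ} (f : PS n → ℝ) : Prop := ∀ x ℓ, f (ztrans ℓ x) = f x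

/-- A lift of a map of `𝔸ᵏ` homotopic to the identity. -/
def EquivariantMap {n : ℕ} (Ψ : PS n → PS n) : Prop :=
  ∀ x ℓ, Ψ (ztrans ℓ x) = ztrans ℓ (Ψ x)

/-- Hamiltonian vector field `X_H = (∂H/∂r, -∂H/∂θ)` on (the lift of) `𝔸ᵏ`. -/
noncomputable def hamVF {n : ℕ} (H : PS n → ℝ) (x : PS n) : PS n :=
  ((fun i => fderiv ℝ H x (0, Pi.single i 1)),
   (fun i => -fderiv ℝ H x (Pi.single i 1, 0)))

/-- `Φ` is the (complete) flow of the Hamiltonian vector field of `H`. -/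
def IsHamFlow {n : ℕ} (H : PS n → ℝ) (Φ : ℝ → PS n → PS n) : Prop :=
  (∀ x, Φ 0 x = x) ∧ ∀ x t, HasDerivAt (fun s => Φ s x) (hamVF H (Φ t x)) t

/-- `φ` is the time-one map `Φ^H` of the (complete) Hamiltonian flow of `H`. -/
def IsTimeOne {n : ℕ} (H : PS n → ℝ) (φ : PS n → PS n) : Prop :=
  ∃ Φ, IsHamFlow H Φ ∧ φ = Φ 1

/-- Hamiltonian vector field on (the lift of) `𝔸^{m+m'} = 𝔸^m × 𝔸^{m'}`. -/
noncomputable def hamVFP {m m' : ℕ} (H : PS m × PS m' → ℝ) (z : PS m × PS m') :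
    PS m × PS m' :=
  (((fun i => fderiv ℝ H z ((0, Pi.single i 1), 0)),
    (fun i => -fderiv ℝ H z ((Pi.single i 1, 0), 0))),
   ((fun i => fderiv ℝ H z (0, (0, Pi.single i 1))),
    (fun i => -fderiv ℝ H z (0, (Pi.single i 1, 0)))))

/-- `Φ` is the (complete) flow of the Hamiltonian vector field of `H` on `𝔸^m × 𝔸^{m'}`. -/
def IsHamFlowP {m m' : ℕ} (H : PS m × PS m' → ℝ)
    (Φ : ℝ → PS m × PS m' → PS m × PS m') : Prop :=
  (∀ z, Φ 0 z = z) ∧ ∀ z t, HasDerivAt (fun s => Φ s z) (hamVFP H (Φ t z)) t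

/-- `φ` is the time-one map of the (complete) Hamiltonian flow of `H` on `𝔸^m × 𝔸^{m'}`. -/
def IsTimeOneP {m m' : ℕ} (H : PS m × PS m' → ℝ) (φ : PS m × PS m' → PS m × PS m') :
    Prop :=
  ∃ Φ, IsHamFlowP H Φ ∧ φ = Φ 1

/-- `ℤ`-indexed iterates of an invertible map. -/
def zIter {X : Type*} (T Tinv : X → X) (k : ℤ) : X → X :=
  if 0 ≤ k then T^[k.toNat] else Tinv^[(-k).toNat]

/-! ### Auxiliary lemmas -/

open Set Filter

/-- Uniqueness of solutions of an autonomous ODE with locally Lipschitz RHS. -/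
theorem ode_unique' {E : Type*} [NormedAddCommGroup E] [NormedSpace ℝ E]
    {v : E → E} (hv : ∀ x : E, ∃ K : NNReal, ∃ s ∈ nhds x, LipschitzOnWith K v s)
    {γ₁ γ₂ : ℝ → E}
    (h₁ : ∀ t, HasDerivAt γ₁ (v (γ₁ t)) t)
    (h₂ : ∀ t, HasDerivAt γ₂ (v (γ₂ t)) t)
    (h0 : γ₁ 0 = γ₂ 0) : ∀ t, γ₁ t = γ₂ t := by
  have hopen : IsOpen {t : ℝ | γ₁ t = γ₂ t} := by
    rw [isOpen_iff_mem_nhds]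
    intro t₀ ht₀
    have ht₀' : γ₁ t₀ = γ₂ t₀ := ht₀
    obtain ⟨K, s, hs, hls⟩ := hv (γ₁ t₀)
    have hf : ∀ᶠ t in nhds t₀, HasDerivAt γ₁ ((fun _ : ℝ => v) t (γ₁ t)) t
        ∧ γ₁ t ∈ (fun _ : ℝ => s) t :=
      ((h₁ t₀).continuousAt.eventually_mem hs).mono fun t ht => ⟨h₁ t, ht⟩
    have hs' : s ∈ nhds (γ₂ t₀) := by rwa [← ht₀']
    have hg : ∀ᶠ t in nhds t₀, HasDerivAt γ₂ ((fun _ : ℝ => v) t (γ₂ t)) t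
        ∧ γ₂ t ∈ (fun _ : ℝ => s) t :=
      ((h₂ t₀).continuousAt.eventually_mem hs').mono fun t ht => ⟨h₂ t, ht⟩
    exact ODE_solution_unique_of_eventually (Filter.Eventually.of_forall fun _ => hls) hf hg ht₀'
  have hcl : IsClosed {t : ℝ | γ₁ t = γ₂ t} :=
    isClosed_eq (continuous_iff_continuousAt.mpr fun t => (h₁ t).continuousAt)
      (continuous_iff_continuousAt.mpr fun t => (h₂ t).continuousAt)
  have := (IsClopen.eq_univ ⟨hcl, hopen⟩ ⟨0, h0⟩ : {t : ℝ | γ₁ t = γ₂ t} = univ)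
  exact fun t => Set.eq_univ_iff_forall.mp this t

theorem contDiff_hamVFP' {m m' : ℕ} {H : PS m × PS m' → ℝ} (hH : ContDiff ℝ (⊤ : ℕ∞) H) :
    ContDiff ℝ 1 (hamVFP H) := by
  have hd : ContDiff ℝ 1 (fderiv ℝ H) := hH.fderiv_right (by norm_cast)
  exact ContDiff.prodMk
    (ContDiff.prodMk
      (contDiff_pi.mpr fun i => hd.clm_apply contDiff_const)
      (contDiff_pi.mpr fun i => (hd.clm_apply contDiff_const).neg))
    (ContDiff.prodMk
      (contDiff_pi.mpr fun i => hd.clm_apply contDiff_const)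
      (contDiff_pi.mpr fun i => (hd.clm_apply contDiff_const).neg))

theorem locLip_of_contDiff {E F : Type*} [NormedAddCommGroup E] [NormedSpace ℝ E]
    [NormedAddCommGroup F] [NormedSpace ℝ F] {v : E → F} (hv : ContDiff ℝ 1 v) :
    ∀ x : E, ∃ K : NNReal, ∃ s ∈ nhds x, LipschitzOnWith K v s :=
  fun _ => hv.contDiffAt.exists_lipschitzOnWith

theorem fderiv_prodH {m m' : ℕ} {f : PS m → ℝ} {g : PS m' → ℝ}
    (hf : ContDiff ℝ (⊤ : ℕ∞) f) (hg : ContDiff ℝ (⊤ : ℕ∞) g) (z : PS m × PS m') :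
    fderiv ℝ (fun z : PS m × PS m' => f z.1 * g z.2) z =
      f z.1 • ((fderiv ℝ g z.2).comp (ContinuousLinearMap.snd ℝ (PS m) (PS m')))
      + g z.2 • ((fderiv ℝ f z.1).comp (ContinuousLinearMap.fst ℝ (PS m) (PS m'))) := by
  have h1 : HasFDerivAt (fun z : PS m × PS m' => f z.1)
      ((fderiv ℝ f z.1).comp (ContinuousLinearMap.fst ℝ (PS m) (PS m'))) z :=
    ((hf.differentiable (by simp) z.1).hasFDerivAt).comp z hasFDerivAt_fst
  have h2 : HasFDerivAt (fun z : PS m × PS m' => g z.2)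
      ((fderiv ℝ g z.2).comp (ContinuousLinearMap.snd ℝ (PS m) (PS m'))) z :=
    ((hg.differentiable (by simp) z.2).hasFDerivAt).comp z hasFDerivAt_snd
  exact (h1.mul h2).fderiv

theorem hamVFP_eq {m m' : ℕ} {f : PS m → ℝ} {g : PS m' → ℝ}
    (hf : ContDiff ℝ (⊤ : ℕ∞) f) (hg : ContDiff ℝ (⊤ : ℕ∞) g) {x' : PS m'} (hdg : fderiv ℝ g x' = 0)
    (y : PS m) :
    hamVFP (fun z : PS m × PS m' => f z.1 * g z.2) (y, x')
      = (g x' • hamVF f y, (0 : PS m')) := by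
  have h := fderiv_prodH hf hg (y, x')
  rw [hdg] at h
  simp only [hamVFP, hamVF, h]
  refine Prod.ext (Prod.ext ?_ ?_) (Prod.ext ?_ ?_) <;> funext i <;>
    simp [ContinuousLinearMap.add_apply, ContinuousLinearMap.smul_apply,
      ContinuousLinearMap.comp_apply, Prod.smul_fst, Prod.smul_snd, Pi.smul_apply,
      smul_eq_mul, mul_neg]

theorem timeone_coupled {m m' : ℕ} {f : PS m → ℝ} {g : PS m' → ℝ}
    (hf : ContDiff ℝ (⊤ : ℕ∞) f) (hg : ContDiff ℝ (⊤ : ℕ∞) g)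
    {φf : PS m → PS m} (hφf : IsTimeOne f φf)
    {φfg : PS m × PS m' → PS m × PS m'}
    (hφfg : IsTimeOneP (fun z : PS m × PS m' => f z.1 * g z.2) φfg)
    {x' : PS m'} (hdg : fderiv ℝ g x' = 0) (y : PS m) :
    (g x' = 0 → φfg (y, x') = (y, x')) ∧ (g x' = 1 → φfg (y, x') = (φf y, x')) := by
  obtain ⟨Ψ, ⟨hΨ0, hΨd⟩, hψ⟩ := hφf
  obtain ⟨Φ, ⟨hΦ0, hΦd⟩, hφ⟩ := hφfg
  have hHc : ContDiff ℝ (⊤ : ℕ∞) (fun z : PS m × PS m' => f z.1 * g z.2) :=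
    (hf.comp contDiff_fst).mul (hg.comp contDiff_snd)
  set c := g x' with hc
  have hγd : ∀ t, HasDerivAt (fun t : ℝ => ((Ψ (c * t) y, x') : PS m × PS m'))
      (hamVFP (fun z : PS m × PS m' => f z.1 * g z.2) (Ψ (c * t) y, x')) t := by
    intro t
    have hmul : HasDerivAt (fun t : ℝ => c * t) c t := by
      simpa using (hasDerivAt_id t).const_mul c
    have h1 : HasDerivAt (fun t : ℝ => Ψ (c * t) y) (c • hamVF f (Ψ (c * t) y)) t := by
      have := (hΨd y (c * t)).scomp t hmul
      exact this
    have h2 : HasDerivAt (fun t : ℝ => ((Ψ (c * t) y, x') : PS m × PS m'))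
        ((c • hamVF f (Ψ (c * t) y), (0 : PS m'))) t := h1.prodMk (hasDerivAt_const t x')
    rwa [hamVFP_eq hf hg hdg (Ψ (c * t) y)]
  have h0 : (fun t : ℝ => ((Ψ (c * t) y, x') : PS m × PS m')) 0 = Φ 0 (y, x') := by
    simp [hΨ0, hΦ0]
  have huniq := ode_unique' (locLip_of_contDiff (contDiff_hamVFP' hHc)) hγd
    (hΦd (y, x')) h0
  have key : Φ 1 (y, x') = (Ψ c y, x') := by
    have := (huniq 1).symm
    simpa using this
  constructor
  · intro h0c
    rw [hφ, key, h0c, hΨ0]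
  · intro h1c
    rw [hφ, key, h1c, hψ]

/-- **Coupling of a wandering domain with a periodic domain**
(Corollary 4.3 of Lazzarini–Marco–Sauzin). -/
theorem coupling_wandering_domain
    (m m' : ℕ) (hm : 1 ≤ m) (hm' : 1 ≤ m')
    (F Finv : PS m → PS m) (G Ginv : PS m' → PS m')
    (hF : ContDiff ℝ (⊤ : ℕ∞) F) (hFi : ContDiff ℝ (⊤ : ℕ∞) Finv) (hFe : EquivariantMap F)
    (hFl : Function.LeftInverse Finv F) (hFr : Function.RightInverse Finv F)
    (hG : ContDiff ℝ (⊤ : ℕ∞) G) (hGi : ContDiff ℝ (⊤ : ℕ∞) Ginv) (hGe : EquivariantMap G)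
    (hGl : Function.LeftInverse Ginv G) (hGr : Function.RightInverse Ginv G)
    (f : PS m → ℝ) (g : PS m' → ℝ)
    (hf : ContDiff ℝ (⊤ : ℕ∞) f) (hg : ContDiff ℝ (⊤ : ℕ∞) g)
    (hfp : ZnPeriodic f) (hgp : ZnPeriodic g)
    (hfc : ∃ Φ, IsHamFlow f Φ) (hgc : ∃ Φ, IsHamFlow g Φ)
    (q : ℕ) (hq : 1 ≤ q) (V : Set (PS m'))
    (hVper : G^[q] '' V = V)
    (hsync0 : ∀ x' ∈ V, g x' = 1 ∧ fderiv ℝ g x' = 0)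
    (hsync : ∀ x' ∈ V, ∀ s : ℕ, 1 ≤ s → s ≤ q - 1 →
      g (G^[s] x') = 0 ∧ fderiv ℝ g (G^[s] x') = 0)
    -- `φf` is the time-one map of `f`, and `𝒰` is a wandering set of `Φ^f ∘ F^q`
    (φf : PS m → PS m) (hφf : IsTimeOne f φf)
    (Pinv : PS m → PS m)
    (hPl : Function.LeftInverse Pinv (φf ∘ F^[q]))
    (hPr : Function.RightInverse Pinv (φf ∘ F^[q]))
    (U : Set (PS m))
    (hUw : ∀ k : ℤ, k ≠ 0 → Disjoint (zIter (φf ∘ F^[q]) Pinv k '' U) U) :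
    ∀ φfg : PS m × PS m' → PS m × PS m',
      IsTimeOneP (fun z : PS m × PS m' => f z.1 * g z.2) φfg →
      ∀ Fcinv : PS m × PS m' → PS m × PS m',
        Function.LeftInverse Fcinv (φfg ∘ fun z : PS m × PS m' => (F z.1, G z.2)) →
        Function.RightInverse Fcinv (φfg ∘ fun z : PS m × PS m' => (F z.1, G z.2)) →
        ∀ k : ℤ, k ≠ 0 →
          Disjoint
            (zIter (φfg ∘ fun z : PS m × PS m' => (F z.1, G z.2)) Fcinv k '' (U ×ˢ V))
            (U ×ˢ V) := by
  intro φfg hTO Fcinv hFcl hFcr k hk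
  set Fc : PS m × PS m' → PS m × PS m' :=
    φfg ∘ fun z : PS m × PS m' => (F z.1, G z.2) with hFc
  set P : PS m → PS m := φf ∘ F^[q] with hP
  -- key consequences of the synchronization conditions
  have key := fun (x' : PS m') (hdg : fderiv ℝ g x' = 0) (y : PS m) =>
    timeone_coupled hf hg hφf hTO hdg y
  have hVmem : ∀ v ∈ V, G^[q] v ∈ V := fun v hv => hVper ▸ ⟨v, hv, rfl⟩
  have hnotV : ∀ v ∈ V, ∀ s : ℕ, 1 ≤ s → s ≤ q - 1 → G^[s] v ∉ V := by
    intro v hv s hs1 hs2 hmem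
    have h0 := (hsync v hv s hs1 hs2).1
    have h1 := (hsync0 _ hmem).1
    rw [h1] at h0; exact one_ne_zero h0
  -- intermediate iterates
  have hmid : ∀ (x : PS m), ∀ v ∈ V, ∀ j : ℕ, j ≤ q - 1 →
      Fc^[j] (x, v) = (F^[j] x, G^[j] v) := by
    intro x v hv j
    induction j with
    | zero => intro _; simp
    | succ j ih =>
      intro hj
      have hj' : j ≤ q - 1 := Nat.le_of_succ_le hj
      rw [Function.iterate_succ_apply', ih hj']
      have hgs := hsync v hv (j + 1) (Nat.le_add_left 1 j) hj
      have : Fc (F^[j] x, G^[j] v) = φfg (F^[j + 1] x, G^[j + 1] v) := by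
        simp [hFc, Function.iterate_succ_apply']
      rw [this]
      exact (key (G^[j + 1] v) hgs.2 (F^[j + 1] x)).1 hgs.1
  -- the `q`-block
  have hblock : ∀ (x : PS m), ∀ v ∈ V, Fc^[q] (x, v) = (P x, G^[q] v) := by
    intro x v hv
    have hq' : q = (q - 1) + 1 := (Nat.succ_pred_eq_of_pos hq).symm
    have e1 : F (F^[q - 1] x) = F^[q] x := by
      conv_rhs => rw [hq']
      rw [Function.iterate_succ_apply']
    have e2 : G (G^[q - 1] v) = G^[q] v := by
      conv_rhs => rw [hq']
      rw [Function.iterate_succ_apply']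
    have estep : Fc^[q] (x, v) = Fc (Fc^[q - 1] (x, v)) := by
      conv_lhs => rw [hq']
      rw [Function.iterate_succ_apply']
    rw [estep, hmid x v hv (q - 1) le_rfl]
    have h1 : Fc (F^[q - 1] x, G^[q - 1] v) = φfg (F^[q] x, G^[q] v) := by
      simp [hFc, e1, e2]
    rw [h1]
    have hqv : G^[q] v ∈ V := hVmem v hv
    have h2 := hsync0 _ hqv
    exact (key (G^[q] v) h2.2 (F^[q] x)).2 h2.1
  -- `n` blocks
  have hblocks : ∀ (n : ℕ) (x : PS m), ∀ v ∈ V,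
      Fc^[n * q] (x, v) = (P^[n] x, G^[n * q] v) ∧ G^[n * q] v ∈ V := by
    intro n
    induction n with
    | zero => intro x v hv; simpa using hv
    | succ n ih =>
      intro x v hv
      have hnq : (n + 1) * q = q + n * q := by ring
      obtain ⟨ih1, ih2⟩ := ih x v hv
      constructor
      · have e : Fc^[q + n * q] (x, v) = Fc^[q] (Fc^[n * q] (x, v)) :=
          Function.iterate_add_apply _ _ _ _
        rw [hnq, e, ih1, hblock _ _ ih2]
        exact Prod.ext (Function.iterate_succ_apply' P n x).symm
          (Function.iterate_add_apply G q (n * q) v).symm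
      · rw [hnq, Function.iterate_add_apply]
        exact hVmem _ ih2
  -- no positive iterate of a point of `U ×ˢ V` returns to `U ×ˢ V`
  have hpos : ∀ j : ℕ, 1 ≤ j → ∀ z ∈ U ×ˢ V, Fc^[j] z ∉ U ×ˢ V := by
    rintro j hj ⟨u, v⟩ ⟨hu, hv⟩ hmem
    obtain ⟨hu, hv⟩ : u ∈ U ∧ v ∈ V := ⟨hu, hv⟩
    have hdecomp : j = j % q + (j / q) * q := by
      rw [mul_comm]; exact (Nat.mod_add_div j q).symm
    obtain ⟨hb1, hb2⟩ := hblocks (j / q) u v hv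
    rw [hdecomp, Function.iterate_add_apply, hb1] at hmem
    rcases Nat.eq_zero_or_pos (j % q) with hs | hs
    · rw [hs] at hmem
      simp only [Function.iterate_zero, id_eq] at hmem
      have hn : (j / q) ≠ 0 := by
        intro h0; rw [h0, hs] at hdecomp; omega
      have hd := hUw (j / q : ℕ) (by exact_mod_cast hn)
      have hzi : zIter (φf ∘ F^[q]) Pinv ((j / q : ℕ) : ℤ) = P^[j / q] := by
        rw [zIter, if_pos (Int.natCast_nonneg _), Int.toNat_natCast]
      rw [hzi] at hd
      exact Set.disjoint_left.mp hd ⟨u, hu, rfl⟩ hmem.1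
    · have hsq : j % q ≤ q - 1 := by
        have := Nat.mod_lt j (show 0 < q by omega)
        omega
      rw [hmid _ _ hb2 _ hsq] at hmem
      exact hnotV _ hb2 (j % q) hs hsq hmem.2
  -- conclude, splitting on the sign of `k`
  rcases lt_or_gt_of_ne hk with hneg | hpos'
  · have hj : 1 ≤ (-k).toNat := by omega
    rw [zIter, if_neg (by omega)]
    rw [Set.disjoint_left]
    rintro z ⟨w, hw, rfl⟩ hz
    have hwz : Fc^[(-k).toNat] (Fcinv^[(-k).toNat] w) = w :=
      (hFcr.iterate (-k).toNat) w
    have : Fc^[(-k).toNat] (Fcinv^[(-k).toNat] w) ∉ U ×ˢ V :=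
      hpos _ hj _ hz
    rw [hwz] at this
    exact this hw
  · rw [zIter, if_pos (by omega)]
    rw [Set.disjoint_left]
    rintro z ⟨w, hw, rfl⟩ hz
    exact hpos k.toNat (by omega) w hw hz
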